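/- For all natural numbers P and K with 1 ≤ K and 2K ≤ P, the following chains of inequalities hold in the real numbers: (1 − K/(P − K + 1))^K ≤ C(P − K, K)/C(P, K) ≤ (1 − K/P)^K, and consequently exp(−K²/(P − 2K + 1)) ≤ C(P − K, K)/C(P, K) ≤ exp(−K²/P). -/

import Mathlib

/-!
Since `C(n, K) = n⁽ᴷ⁾ / K!` with the falling factorial `n⁽ᴷ⁾`, the ratio is the product
`∏_{i<K} (1 - K / (P - i))`, whose `K` factors lie between `1 - K / (P - K + 1)` and `1 - K / P`.
The exponential bounds follow factorwise from `1 - x ≤ exp (-x)` and its consequence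
`exp (-t / (s - t)) ≤ 1 - t / s`.
-/

open Finset Real

theorem Nat.cast_descFactorial_eq_prod_range_sub {R : Type*} [CommRing R] (n k : ℕ) :
    (n.descFactorial k : R) = ∏ i ∈ range k, ((n : R) - i) := by
  induction k with
  | zero => simp
  | succ k ih =>
    rw [prod_range_succ, ← ih, Nat.descFactorial_succ, Nat.cast_mul, mul_comm]
    rcases le_or_gt k n with hk | hk
    · rw [Nat.cast_sub hk]
    · simp [Nat.descFactorial_eq_zero_iff_lt.mpr hk]

theorem Nat.cast_choose_div_cast_choose {𝕜 : Type*} [Field 𝕜] [CharZero 𝕜] (m n k : ℕ) :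
    (m.choose k : 𝕜) / n.choose k = m.descFactorial k / n.descFactorial k := by
  rw [Nat.descFactorial_eq_factorial_mul_choose, Nat.descFactorial_eq_factorial_mul_choose,
    Nat.cast_mul, Nat.cast_mul, mul_div_mul_left _ _ (Nat.cast_ne_zero.mpr k.factorial_ne_zero)]

theorem choose_sub_div_choose_eq_prod {P K : ℕ} (hKP : K ≤ P) :
    ((P - K).choose K : ℝ) / P.choose K = ∏ i ∈ range K, (1 - (K : ℝ) / ((P : ℝ) - i)) := by
  rw [Nat.cast_choose_div_cast_choose, Nat.cast_descFactorial_eq_prod_range_sub,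
    Nat.cast_descFactorial_eq_prod_range_sub, ← prod_div_distrib, Nat.cast_sub hKP]
  refine prod_congr rfl fun i hi => ?_
  have hiP : (i : ℝ) < P := by exact_mod_cast (mem_range.mp hi).trans_le hKP
  field_simp [(sub_pos.mpr hiP).ne']
  ring

theorem choose_sub_div_choose_bounds {P K : ℕ} (h : 2 * K ≤ P) :
    (1 - (K : ℝ) / ((P : ℝ) - K + 1)) ^ K ≤ ((P - K).choose K : ℝ) / P.choose K ∧
      ((P - K).choose K : ℝ) / P.choose K ≤ (1 - (K : ℝ) / P) ^ K := by
  have hKP : 2 * (K : ℝ) ≤ P := by exact_mod_cast h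
  have factor_bounds : ∀ i ∈ range K, 0 ≤ 1 - (K : ℝ) / ((P : ℝ) - K + 1) ∧
      1 - (K : ℝ) / ((P : ℝ) - K + 1) ≤ 1 - (K : ℝ) / ((P : ℝ) - i) ∧
      1 - (K : ℝ) / ((P : ℝ) - i) ≤ 1 - (K : ℝ) / P := by
    intro i hi
    have hiK : (i : ℝ) + 1 ≤ K := by exact_mod_cast mem_range.mp hi
    have hi0 : (0 : ℝ) ≤ i := i.cast_nonneg
    refine ⟨?_, ?_, ?_⟩
    · rw [sub_nonneg, div_le_one (by linarith)]
      linarith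
    · gcongr 1 - _ / ?_ <;> linarith
    · gcongr 1 - _ / ?_ <;> linarith
  rw [choose_sub_div_choose_eq_prod (by omega)]
  constructor
  · calc (1 - (K : ℝ) / ((P : ℝ) - K + 1)) ^ K
        = ∏ _i ∈ range K, (1 - (K : ℝ) / ((P : ℝ) - K + 1)) := by rw [prod_const, card_range]
      _ ≤ _ :=
          prod_le_prod (fun i hi => (factor_bounds i hi).1) fun i hi => (factor_bounds i hi).2.1
  · calc ∏ i ∈ range K, (1 - (K : ℝ) / ((P : ℝ) - i))
        ≤ ∏ _i ∈ range K, (1 - (K : ℝ) / P) :=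
          prod_le_prod (fun i hi => (factor_bounds i hi).1.trans (factor_bounds i hi).2.1)
            fun i hi => (factor_bounds i hi).2.2
      _ = _ := by rw [prod_const, card_range]

theorem Real.exp_neg_div_sub_le_one_sub_div {s t : ℝ} (ht : 0 ≤ t) (hts : t < s) :
    exp (-(t / (s - t))) ≤ 1 - t / s := by
  have hs : 0 < s := ht.trans_lt hts
  have hst : 0 < s - t := sub_pos.mpr hts
  calc exp (-(t / (s - t))) = (exp (t / (s - t)))⁻¹ := exp_neg _
    _ ≤ (t / (s - t) + 1)⁻¹ := inv_anti₀ (by positivity) (add_one_le_exp _)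
    _ = 1 - t / s := by field_simp; ring

theorem Real.exp_neg_sq_div_eq_pow (k : ℕ) (d : ℝ) :
    exp (-(k : ℝ) ^ 2 / d) = exp (-((k : ℝ) / d)) ^ k := by
  rw [← exp_nat_mul]
  ring_nf

theorem choose_ratio_bounds_general (P K : ℕ) (h : 2 * K ≤ P) :
    ((1 - (K : ℝ) / ((P : ℝ) - (K : ℝ) + 1)) ^ K ≤ ((P - K).choose K : ℝ) / (P.choose K : ℝ) ∧
      ((P - K).choose K : ℝ) / (P.choose K : ℝ) ≤ (1 - (K : ℝ) / (P : ℝ)) ^ K) ∧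
    (Real.exp (-(K : ℝ) ^ 2 / ((P : ℝ) - 2 * (K : ℝ) + 1)) ≤
        ((P - K).choose K : ℝ) / (P.choose K : ℝ) ∧
      ((P - K).choose K : ℝ) / (P.choose K : ℝ) ≤ Real.exp (-(K : ℝ) ^ 2 / (P : ℝ))) := by
  obtain ⟨hlow, hhigh⟩ := choose_sub_div_choose_bounds h
  have hKP : 2 * (K : ℝ) ≤ P := by exact_mod_cast h
  have hK0 : (0 : ℝ) ≤ K := K.cast_nonneg
  refine ⟨⟨hlow, hhigh⟩, ?_, ?_⟩
  · have hfactor := exp_neg_div_sub_le_one_sub_div hK0 (by linarith : (K : ℝ) < P - K + 1)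
    rw [show (P : ℝ) - K + 1 - K = P - 2 * K + 1 by ring] at hfactor
    rw [exp_neg_sq_div_eq_pow]
    exact (pow_le_pow_left₀ (exp_nonneg _) hfactor K).trans hlow
  · have hfactor_nonneg : 0 ≤ 1 - (K : ℝ) / P :=
      sub_nonneg.mpr (div_le_one_of_le₀ (by linarith) (by linarith))
    rw [exp_neg_sq_div_eq_pow]
    exact hhigh.trans (pow_le_pow_left₀ hfactor_nonneg (one_sub_le_exp_neg _) K)

theorem choose_ratio_bounds (P K : ℕ) (hK : 1 ≤ K) (h : 2 * K ≤ P) :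
    ((1 - (K : ℝ) / ((P : ℝ) - (K : ℝ) + 1)) ^ K ≤ ((P - K).choose K : ℝ) / (P.choose K : ℝ) ∧
      ((P - K).choose K : ℝ) / (P.choose K : ℝ) ≤ (1 - (K : ℝ) / (P : ℝ)) ^ K) ∧
    (Real.exp (-(K : ℝ) ^ 2 / ((P : ℝ) - 2 * (K : ℝ) + 1)) ≤
        ((P - K).choose K : ℝ) / (P.choose K : ℝ) ∧
      ((P - K).choose K : ℝ) / (P.choose K : ℝ) ≤ Real.exp (-(K : ℝ) ^ 2 / (P : ℝ))) :=
  choose_ratio_bounds_general P K h
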